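/- arXiv:2208.06236 — 2 statements merged into one kernel-verified Lean document; each statement's English description precedes it below -/
import Mathlib

section
/- Let n ≥ 1 and let z, z' ∈ ℝⁿ differ in at most one coordinate. Then the symmetry test statistic T(z) = d_KS(F̂_z, F̂_{−z}), where −z denotes the vector (−z_1, …, −z_n), satisfies |T(z) − T(z')| ≤ 2/n; i.e., the sensitivity of the paired-data Kolmogorov–Smirnov symmetry statistic is at most 2/n. -/
/-!
Changing one coordinate of `z` changes at most one coordinate of `-z`, and changing one
coordinate of a sample moves its empirical cdf by at most `1/n`, uniformly in `t`. Hence both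
arguments of `d_KS` move by at most `1/n` in sup norm, and `d_KS` moves by at most `2/n`.
-/

open Filter

/-- Empirical cdf of a sample `x : Fin n → ℝ`. -/
noncomputable def ecdf {n : ℕ} (x : Fin n → ℝ) (t : ℝ) : ℝ :=
  (Finset.univ.filter (fun i => x i ≤ t)).card / n

/-- Kolmogorov–Smirnov distance. -/
noncomputable def dKS (F G : ℝ → ℝ) : ℝ := ⨆ t : ℝ, |F t - G t|

open Finset

theorem card_filter_le_card_filter_add_hammingDist {ι β : Type*} [Fintype ι] [DecidableEq ι]
    [DecidableEq β] (p : β → Prop) [DecidablePred p] (x y : ι → β) :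
    #{i | p (x i)} ≤ #{i | p (y i)} + hammingDist x y := by
  have hsub : filter (fun i => p (x i)) univ ⊆
      filter (fun i => p (y i)) univ ∪ filter (fun i => x i ≠ y i) univ := by
    intro i hi
    by_cases hxy : x i = y i <;> simp_all
  exact (card_le_card hsub).trans (card_union_le _ _)

theorem abs_ecdf_sub_ecdf_le {n : ℕ} (x y : Fin n → ℝ) (t : ℝ) :
    |ecdf x t - ecdf y t| ≤ hammingDist x y / n := by
  have hxy := card_filter_le_card_filter_add_hammingDist (· ≤ t) x y
  have hyx := card_filter_le_card_filter_add_hammingDist (· ≤ t) y x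
  rw [hammingDist_comm] at hyx
  rw [ecdf, ecdf, ← sub_div, abs_div, Nat.abs_cast]
  gcongr
  rw [abs_sub_le_iff, sub_le_iff_le_add', sub_le_iff_le_add']
  constructor <;> exact_mod_cast ‹_›

theorem dKS_le_dKS_add {F G F' G' : ℝ → ℝ} {a b : ℝ} (hF : ∀ t, |F t - F' t| ≤ a)
    (hG : ∀ t, |G t - G' t| ≤ b) (hbdd : BddAbove (Set.range fun t => |F' t - G' t|)) :
    dKS F G ≤ dKS F' G' + (a + b) :=
  ciSup_le fun t => calc
    |F t - G t| ≤ |F' t - G' t| + (|F t - F' t| + |G t - G' t|) := by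
      have := abs_sub_le (F t) (F' t) (G t)
      have := abs_sub_le (F' t) (G' t) (G t)
      rw [abs_sub_comm (G' t)] at this
      linarith
    _ ≤ dKS F' G' + (a + b) := add_le_add (le_ciSup hbdd t) (add_le_add (hF t) (hG t))

theorem abs_dKS_sub_dKS_le {F G F' G' : ℝ → ℝ} {a b : ℝ} (hF : ∀ t, |F t - F' t| ≤ a)
    (hG : ∀ t, |G t - G' t| ≤ b) (hbdd : BddAbove (Set.range fun t => |F t - G t|))
    (hbdd' : BddAbove (Set.range fun t => |F' t - G' t|)) :
    |dKS F G - dKS F' G'| ≤ a + b := by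
  rw [abs_sub_le_iff, sub_le_iff_le_add', sub_le_iff_le_add']
  refine ⟨dKS_le_dKS_add hF hG hbdd', dKS_le_dKS_add (fun t => ?_) (fun t => ?_) hbdd⟩
  · exact abs_sub_comm (F' t) (F t) ▸ hF t
  · exact abs_sub_comm (G' t) (G t) ▸ hG t

theorem bddAbove_range_abs_ecdf_sub_ecdf {n : ℕ} (x y : Fin n → ℝ) :
    BddAbove (Set.range fun t => |ecdf x t - ecdf y t|) :=
  ⟨_, Set.forall_mem_range.2 (abs_ecdf_sub_ecdf_le x y)⟩

theorem abs_dKS_ecdf_neg_sub_le {n : ℕ} (z z' : Fin n → ℝ) :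
    |dKS (ecdf z) (ecdf (fun i => -z i)) - dKS (ecdf z') (ecdf (fun i => -z' i))| ≤
      2 * hammingDist z z' / n := by
  have hneg : (hammingDist (fun i => -z i) (fun i => -z' i) : ℝ) ≤ hammingDist z z' := by
    exact_mod_cast hammingDist_comp_le_hammingDist (fun _ => Neg.neg)
  calc _ ≤ (hammingDist z z' : ℝ) / n + hammingDist (fun i => -z i) (fun i => -z' i) / n :=
        abs_dKS_sub_dKS_le (abs_ecdf_sub_ecdf_le z z') (abs_ecdf_sub_ecdf_le _ _)
          (bddAbove_range_abs_ecdf_sub_ecdf _ _) (bddAbove_range_abs_ecdf_sub_ecdf _ _)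
    _ ≤ 2 * (hammingDist z z' : ℝ) / n := by
        rw [← add_div, two_mul]
        gcongr

theorem symmetry_KS_sensitivity_general {n : ℕ} (z z' : Fin n → ℝ)
    (hadj : hammingDist z z' ≤ 1) :
    |dKS (ecdf z) (ecdf (fun i => -z i)) -
      dKS (ecdf z') (ecdf (fun i => -z' i))| ≤ 2 / n := by
  calc _ ≤ 2 * (hammingDist z z' : ℝ) / n := abs_dKS_ecdf_neg_sub_le z z'
    _ ≤ 2 * 1 / n := by gcongr; exact_mod_cast hadj
    _ = 2 / n := by rw [mul_one]

theorem symmetry_KS_sensitivity {n : ℕ} (hn : 1 ≤ n) (z z' : Fin n → ℝ)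
    (hadj : hammingDist z z' ≤ 1) :
    |dKS (ecdf z) (ecdf (fun i => -z i)) -
      dKS (ecdf z') (ecdf (fun i => -z' i))| ≤ 2 / n :=
  symmetry_KS_sensitivity_general z z' hadj
end

section
/- Let n ≥ 1 and let z, z' ∈ ℝⁿ differ in at most one coordinate. Then the symmetry test statistic T_K(z) = d_K(F̂_z, F̂_{−z}), where −z denotes the vector (−z_1, …, −z_n), satisfies |T_K(z) − T_K(z')| ≤ 2/n; i.e., the sensitivity of the paired-data Kuiper symmetry statistic is at most 2/n. -/
open Filter

/-- Kuiper distance. -/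
noncomputable def dK (F G : ℝ → ℝ) : ℝ :=
  (⨆ t : ℝ, (F t - G t)) + (⨆ s : ℝ, (G s - F s))

/-!
Changing one coordinate of a sample moves its empirical cdf by at most `1/n`, and only in one
direction, so the Kuiper distance between the empirical cdfs of adjacent samples is at most `1/n`.
Negating the sample preserves adjacency, and the Kuiper distance is a pseudometric on bounded
functions; the triangle inequality through `F̂_{z'}` and `F̂_{-z'}` therefore changes
`d_K(F̂_z, F̂_{-z})` by at most `1/n + 1/n`.
-/

open Set Bornology

section KuiperDistance

variable {F G H : ℝ → ℝ}

lemma bddAbove_range_sub (hF : IsBounded (range F)) (hG : IsBounded (range G)) :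
    BddAbove (range fun t => F t - G t) := by
  obtain ⟨a, ha⟩ := hF.bddAbove
  obtain ⟨b, hb⟩ := hG.bddBelow
  exact ⟨a - b, by rintro _ ⟨t, rfl⟩; exact sub_le_sub (ha ⟨t, rfl⟩) (hb ⟨t, rfl⟩)⟩

lemma iSup_sub_le_iSup_sub_add_iSup_sub (hF : IsBounded (range F))
    (hG : IsBounded (range G)) (hH : IsBounded (range H)) :
    ⨆ t, (F t - H t) ≤ (⨆ t, (F t - G t)) + ⨆ t, (G t - H t) :=
  ciSup_le fun t => by
    have hFG := le_ciSup (bddAbove_range_sub hF hG) t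
    have hGH := le_ciSup (bddAbove_range_sub hG hH) t
    linarith

lemma dK_comm (F G : ℝ → ℝ) : dK F G = dK G F :=
  add_comm _ _

lemma dK_triangle (hF : IsBounded (range F)) (hG : IsBounded (range G))
    (hH : IsBounded (range H)) : dK F H ≤ dK F G + dK G H := by
  unfold dK
  linarith [iSup_sub_le_iSup_sub_add_iSup_sub hF hG hH,
    iSup_sub_le_iSup_sub_add_iSup_sub hH hG hF]

lemma dK_le_dK_add_dK_add_dK {F' G' : ℝ → ℝ} (hF : IsBounded (range F))
    (hG : IsBounded (range G)) (hF' : IsBounded (range F')) (hG' : IsBounded (range G')) :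
    dK F G ≤ dK F F' + dK F' G' + dK G' G := by
  linarith [dK_triangle hF hF' hG, dK_triangle hF' hG' hG]

end KuiperDistance

lemma exists_forall_ne_eq_of_hammingDist_le_one {ι : Type*} {β : ι → Type*} [Fintype ι]
    [Nonempty ι] [∀ i, DecidableEq (β i)] {x y : ∀ i, β i} (h : hammingDist x y ≤ 1) :
    ∃ i, ∀ j ≠ i, x j = y j := by
  obtain ⟨i, hi⟩ := Finset.card_le_one_iff_subset_singleton.1 h
  exact ⟨i, fun j hj => by_contra fun hne => hj (Finset.mem_singleton.1 (hi (by simpa using hne)))⟩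

section EmpiricalCdf

variable {n : ℕ}

lemma ecdf_mem_Icc (x : Fin n → ℝ) (t : ℝ) : ecdf x t ∈ Icc (0 : ℝ) 1 := by
  refine ⟨by unfold ecdf; positivity, div_le_one_of_le₀ ?_ n.cast_nonneg⟩
  exact_mod_cast (Finset.card_filter_le _ _).trans (Finset.card_fin n).le

lemma isBounded_range_ecdf (x : Fin n → ℝ) : IsBounded (range (ecdf x)) :=
  (Metric.isBounded_Icc 0 1).subset (range_subset_iff.2 (ecdf_mem_Icc x))

lemma ecdf_sub_ecdf_mem_Icc {x y : Fin n → ℝ} {i : Fin n} (hxy : ∀ j ≠ i, x j = y j)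
    (hle : x i ≤ y i) (t : ℝ) : ecdf x t - ecdf y t ∈ Icc 0 (1 / (n : ℝ)) := by
  set A := Finset.univ.filter fun j => x j ≤ t
  set B := Finset.univ.filter fun j => y j ≤ t
  have hBA : B ⊆ A := by
    intro j hj
    simp only [A, B, Finset.mem_filter, Finset.mem_univ, true_and] at hj ⊢
    obtain rfl | hji := eq_or_ne j i
    · exact hle.trans hj
    · rwa [hxy j hji]
  have hAB : A \ B ⊆ {i} := by
    intro j hj
    simp only [A, B, Finset.mem_sdiff, Finset.mem_filter, Finset.mem_univ, true_and] at hj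
    by_contra hji
    exact hj.2 (hxy j (Finset.notMem_singleton.1 hji) ▸ hj.1)
  have hsub : ecdf x t - ecdf y t = (A \ B).card / n := by
    rw [ecdf, ecdf, ← sub_div, ← Finset.card_sdiff_add_card_eq_card hBA]
    push_cast
    ring
  have hcard : ((A \ B).card : ℝ) ≤ 1 := by
    exact_mod_cast (Finset.card_le_card hAB).trans (Finset.card_singleton i).le
  rw [hsub]
  exact ⟨by positivity, div_le_div_of_nonneg_right hcard n.cast_nonneg⟩

lemma dK_ecdf_le_of_forall_ne_eq {x y : Fin n → ℝ} {i : Fin n} (hxy : ∀ j ≠ i, x j = y j) :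
    dK (ecdf x) (ecdf y) ≤ 1 / n := by
  wlog hle : x i ≤ y i generalizing x y
  · rw [dK_comm]
    exact this (fun j hj => (hxy j hj).symm) (le_of_not_ge hle)
  have h := ecdf_sub_ecdf_mem_Icc hxy hle
  have hxy_sup : ⨆ t, (ecdf x t - ecdf y t) ≤ 1 / n := ciSup_le fun t => (h t).2
  have hyx_sup : ⨆ t, (ecdf y t - ecdf x t) ≤ 0 := ciSup_le fun t => by linarith [(h t).1]
  unfold dK
  linarith

lemma dK_ecdf_le_of_hammingDist_le_one [NeZero n] {x y : Fin n → ℝ}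
    (h : hammingDist x y ≤ 1) : dK (ecdf x) (ecdf y) ≤ 1 / n :=
  have ⟨_, hxy⟩ := exists_forall_ne_eq_of_hammingDist_le_one h
  dK_ecdf_le_of_forall_ne_eq hxy

end EmpiricalCdf

theorem symmetry_Kuiper_sensitivity {n : ℕ} (hn : 1 ≤ n) (z z' : Fin n → ℝ)
    (hadj : hammingDist z z' ≤ 1) :
    |dK (ecdf z) (ecdf (fun i => -z i)) -
      dK (ecdf z') (ecdf (fun i => -z' i))| ≤ 2 / n := by
  have : NeZero n := ⟨by omega⟩
  have hadj_neg : hammingDist (fun i => -z i) (fun i => -z' i) ≤ 1 := by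
    rwa [hammingDist_comp (fun _ => Neg.neg) fun _ => neg_injective]
  have hz := dK_ecdf_le_of_hammingDist_le_one hadj
  have hz_neg := dK_ecdf_le_of_hammingDist_le_one hadj_neg
  have hb := isBounded_range_ecdf (n := n)
  have h := dK_le_dK_add_dK_add_dK (hb z) (hb fun i => -z i) (hb z') (hb fun i => -z' i)
  have h' := dK_le_dK_add_dK_add_dK (hb z') (hb fun i => -z' i) (hb z) (hb fun i => -z i)
  rw [dK_comm (ecdf fun i => -z' i) (ecdf fun i => -z i)] at h
  rw [dK_comm (ecdf z') (ecdf z)] at h'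
  rw [abs_sub_le_iff, show (2 : ℝ) / n = 1 / n + 1 / n by ring]
  constructor <;> linarith
end
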